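/- Let G be a finite group, M = (D, σ, α) a connected combinatorial map, and κ a nowhere-identity G-flow on M. Then there exist a connected combinatorial map K, a covering p : K → M* of the dual map M* = (D, σ∘α, α), and a proper G-coloring c of K such that c(tail(d'))·c(head(d'))⁻¹ = κ(p(d')) for every dart d' of K (tail and head taken in K). -/

import Mathlib

open Equiv

/-- The setoid on darts whose classes are the cycles (orbits) of a permutation. -/
def Equiv.Perm.cycleSetoid {D : Type*} (τ : Equiv.Perm D) : Setoid D :=
  ⟨τ.SameCycle, ⟨fun x => Equiv.Perm.SameCycle.refl τ x, fun h => h.symm, fun h h' => h.trans h'⟩⟩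

/-- The number of cycles (orbits) of a permutation. -/
noncomputable def Equiv.Perm.cycleCount {D : Type*} (τ : Equiv.Perm D) : ℕ :=
  Nat.card (Quotient τ.cycleSetoid)

/-- The ordered product of the values of `κ` around the `τ`-orbit of the dart `d`. -/
noncomputable def aroundProd {D G : Type*} [Group G] (τ : Equiv.Perm D) (κ : D → G) (d : D) : G :=
  ((List.range (Function.minimalPeriod (⇑τ) d)).map fun i => κ ((τ ^ i) d)).prod

/-- A `G`-labelling of a combinatorial map with edge involution `α`. -/
def IsGLabelling {D G : Type*} [Group G] (α : Equiv.Perm D) (κ : D → G) : Prop :=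
  ∀ d, κ (α d) = (κ d)⁻¹

/-- A `G`-flow on the combinatorial map `(D, σ, α)`. -/
def IsGFlow {D G : Type*} [Group G] (σ α : Equiv.Perm D) (κ : D → G) : Prop :=
  IsGLabelling α κ ∧ ∀ d, aroundProd σ κ d = 1

/-- A local `G`-tension on the combinatorial map `(D, σ, α)`: the product around every
face (orbit of `σ ∘ α`) is the identity. -/
def IsLocalTension {D G : Type*} [Group G] (σ α : Equiv.Perm D) (κ : D → G) : Prop :=
  IsGLabelling α κ ∧ ∀ d, aroundProd (σ * α) κ d = 1

/-- A closed walk in the combinatorial map `(D, σ, α)`, as a nonempty list of darts. -/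
def IsClosedWalk {D : Type*} (σ α : Equiv.Perm D) (W : List D) : Prop :=
  ∃ h : W ≠ [], W.Chain' (fun a b => σ.SameCycle (α a) b) ∧
    σ.SameCycle (α (W.getLast h)) (W.head h)

/-- A global `G`-tension on the combinatorial map `(D, σ, α)`. -/
def IsGlobalTension {D G : Type*} [Group G] (σ α : Equiv.Perm D) (κ : D → G) : Prop :=
  IsGLabelling α κ ∧ ∀ W : List D, IsClosedWalk σ α W → (W.map κ).prod = 1

/-- Connectivity of the combinatorial map `(D, σ, α)`: the group generated by `σ` and `α`
acts transitively on the darts. -/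
def MapConnected {D : Type*} (σ α : Equiv.Perm D) : Prop :=
  ∀ d d' : D, ∃ g ∈ Subgroup.closure ({σ, α} : Set (Equiv.Perm D)), g d = d'

/-- A covering of combinatorial maps `(D', σ', α') → (D, σ, α)`. -/
def IsMapCovering {D' D : Type*} (σ' α' : Equiv.Perm D') (σ α : Equiv.Perm D)
    (p : D' → D) : Prop :=
  Function.Surjective p ∧ (∀ d, p (σ' d) = σ (p d)) ∧ (∀ d, p (α' d) = α (p d)) ∧
    ∀ d₁ d₂, σ'.SameCycle d₁ d₂ → p d₁ = p d₂ → d₁ = d₂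

set_option linter.unusedSectionVars false

section Aux

variable {D G : Type} [Group G]

private lemma alpKfun_invol (α : Equiv.Perm D) (κ : D → G)
    (hinv : ∀ d, α (α d) = d) (hlab : ∀ d, κ (α d) = (κ d)⁻¹) :
    Function.Involutive (fun x : G × D => ((κ x.2)⁻¹ * x.1, α x.2)) := by
  intro x
  refine Prod.ext ?_ (hinv x.2)
  simp [hlab]

private def sigK (σ α : Equiv.Perm D) : Equiv.Perm (G × D) :=
  Equiv.prodCongr (Equiv.refl G) (σ * α)

private lemma sigK_apply (σ α : Equiv.Perm D) (x : G × D) :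
    sigK σ α x = (x.1, (σ * α) x.2) := rfl

private lemma sigK_inv_apply (σ α : Equiv.Perm D) (x : G × D) :
    (sigK σ α)⁻¹ x = (x.1, (σ * α)⁻¹ x.2) := rfl

private lemma sigK_zpow (σ α : Equiv.Perm D) (k : ℤ) :
    ∀ x : G × D, ((sigK σ α) ^ k) x = (x.1, ((σ * α) ^ k) x.2) := by
  induction k using Int.induction_on with
  | zero => intro x; simp
  | succ n ih =>
    intro x
    rw [zpow_add_one, zpow_add_one, Equiv.Perm.mul_apply, Equiv.Perm.mul_apply, ih]
    rfl
  | pred n ih =>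
    intro x
    rw [zpow_sub_one, zpow_sub_one, Equiv.Perm.mul_apply, Equiv.Perm.mul_apply, ih]
    rfl

private lemma perm_inv_apply_self {α : Type*} (f : Equiv.Perm α) (x : α) : f⁻¹ (f x) = x :=
  Equiv.symm_apply_apply f x

private lemma perm_apply_inv_self {α : Type*} (f : Equiv.Perm α) (x : α) : f (f⁻¹ x) = x :=
  Equiv.apply_symm_apply f x

end Aux

/-- A nowhere-identity `G`-flow on a connected combinatorial map `M = (D, σ, α)` gives rise
to a proper `G`-coloring of a connected covering of the dual map `M* = (D, σ∘α, α)`. -/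
theorem flow_gives_coloring_of_covering_of_dual
    {D : Type} [Fintype D] [Nonempty D] (σ α : Equiv.Perm D)
    (hinv : ∀ d, α (α d) = d) (hfpf : ∀ d, α d ≠ d)
    (hconn : MapConnected σ α)
    {G : Type} [Group G] [Fintype G]
    (κ : D → G) (hκ : IsGFlow σ α κ) (hnwi : ∀ d, κ d ≠ 1) :
    ∃ (DK : Type) (_ : Fintype DK) (σK αK : Equiv.Perm DK),
      (∀ d, αK (αK d) = d) ∧ (∀ d, αK d ≠ d) ∧ MapConnected σK αK ∧
      ∃ p : DK → D, IsMapCovering σK αK (σ * α) α p ∧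
      ∃ c : Quotient σK.cycleSetoid → G,
        (∀ d', c (Quotient.mk σK.cycleSetoid d') ≠
          c (Quotient.mk σK.cycleSetoid (αK d'))) ∧
        ∀ d', c (Quotient.mk σK.cycleSetoid d') *
          (c (Quotient.mk σK.cycleSetoid (αK d')))⁻¹ = κ (p d') := by
  classical
  obtain ⟨hlab, -⟩ := hκ
  set σK₀ : Equiv.Perm (G × D) := sigK σ α with hσK₀def
  set αK₀ : Equiv.Perm (G × D) := (alpKfun_invol α κ hinv hlab).toPerm with hαK₀def
  have hαK₀apply : ∀ x : G × D, αK₀ x = ((κ x.2)⁻¹ * x.1, α x.2) := fun _ => rfl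
  have hαK₀invol : ∀ x : G × D, αK₀ (αK₀ x) = x := alpKfun_invol α κ hinv hlab
  set d₀ : D := Classical.arbitrary D with hd₀
  set b₀ : G × D := ((1 : G), d₀) with hb₀
  set H : Subgroup (Equiv.Perm (G × D)) := Subgroup.closure {σK₀, αK₀} with hH
  set S : Set (G × D) := {x | ∃ g ∈ H, g b₀ = x} with hSdef
  have hσmem : σK₀ ∈ H := Subgroup.subset_closure (by simp)
  have hαmem : αK₀ ∈ H := Subgroup.subset_closure (by simp)
  have hb₀S : b₀ ∈ S := ⟨1, one_mem _, rfl⟩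
  have hS : ∀ g ∈ H, ∀ x : G × D, x ∈ S ↔ g x ∈ S := by
    intro g hg x
    constructor
    · rintro ⟨h, hh, rfl⟩
      exact ⟨g * h, mul_mem hg hh, rfl⟩
    · rintro ⟨h, hh, hx⟩
      refine ⟨g⁻¹ * h, mul_mem (inv_mem hg) hh, ?_⟩
      show g⁻¹ (h b₀) = x
      rw [hx]
      exact perm_inv_apply_self g x
  have hσpres : ∀ x : G × D, x ∈ S ↔ σK₀ x ∈ S := fun x => hS σK₀ hσmem x
  have hαpres : ∀ x : G × D, x ∈ S ↔ αK₀ x ∈ S := fun x => hS αK₀ hαmem x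
  set σK : Equiv.Perm {x : G × D // x ∈ S} := σK₀.subtypePerm (fun x => (hσpres x).symm) with hσKdef
  set αK : Equiv.Perm {x : G × D // x ∈ S} := αK₀.subtypePerm (fun x => (hαpres x).symm) with hαKdef
  -- key: first coordinate is invariant along σK-orbits
  have hfst : ∀ (k : ℤ) (x : {x : G × D // x ∈ S}), ((σK ^ k) x).val.1 = x.val.1 := by
    intro k x
    rw [hσKdef, Equiv.Perm.subtypePerm_zpow]
    show ((σK₀ ^ k) x.val).1 = x.val.1
    rw [hσK₀def, sigK_zpow]
  -- restriction of elements of H to the subtype stays in the closure of {σK, αK}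
  have hrestr : ∀ g ∈ H, ∃ g' ∈ Subgroup.closure ({σK, αK} : Set (Equiv.Perm {x : G × D // x ∈ S})),
      ∀ x : {x : G × D // x ∈ S}, (g' x).val = g x.val := by
    intro g hg
    induction hg using Subgroup.closure_induction with
    | mem τ hτ =>
      rcases hτ with rfl | rfl
      · exact ⟨σK, Subgroup.subset_closure (by simp), fun x => rfl⟩
      · exact ⟨αK, Subgroup.subset_closure (by simp), fun x => rfl⟩
    | one => exact ⟨1, one_mem _, fun x => rfl⟩
    | mul g h _ _ pg ph =>
      obtain ⟨g', hg', hgv⟩ := pg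
      obtain ⟨h', hh', hhv⟩ := ph
      refine ⟨g' * h', mul_mem hg' hh', fun x => ?_⟩
      show (g' (h' x)).val = g (h x.val)
      rw [hgv, hhv]
    | inv g _ pg =>
      obtain ⟨g', hg', hgv⟩ := pg
      refine ⟨g'⁻¹, inv_mem hg', fun x => ?_⟩
      have h2 : g ((g'⁻¹ x).val) = x.val := by
        rw [← hgv (g'⁻¹ x), perm_apply_inv_self]
      rw [← h2, perm_inv_apply_self]
  refine ⟨{x : G × D // x ∈ S}, Subtype.fintype _, σK, αK, ?_, ?_, ?_, ?_⟩
  · -- αK is an involution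
    intro d
    apply Subtype.ext
    exact hαK₀invol d.val
  · -- αK is fixed-point free
    intro d hd
    exact hfpf d.val.2 (congrArg (fun x : {x : G × D // x ∈ S} => x.val.2) hd)
  · -- connectivity
    intro x y
    obtain ⟨gx, hgx, hx⟩ := x.2
    obtain ⟨gy, hgy, hy⟩ := y.2
    obtain ⟨g', hg', hval⟩ := hrestr (gy * gx⁻¹) (mul_mem hgy (inv_mem hgx))
    refine ⟨g', hg', ?_⟩
    apply Subtype.ext
    rw [hval x]
    show gy (gx⁻¹ x.val) = y.val
    have hxb : gx⁻¹ x.val = b₀ := by rw [← hx, perm_inv_apply_self]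
    rw [hxb, hy]
  refine ⟨fun x => x.val.2, ⟨?_, fun d => rfl, fun d => rfl, ?_⟩, ?_⟩
  · -- surjectivity of p
    have hfS : ∀ d : D, (∃ x ∈ S, x.2 = d) → ∃ x ∈ S, x.2 = σ d := by
      rintro d ⟨x, hx, rfl⟩
      refine ⟨σK₀ (αK₀ x), (hS σK₀ hσmem _).mp ((hS αK₀ hαmem _).mp hx), ?_⟩
      show (σ * α) (α x.2) = σ x.2
      rw [Equiv.Perm.mul_apply, hinv]
    have hbS : ∀ d : D, (∃ x ∈ S, x.2 = σ d) → ∃ x ∈ S, x.2 = d := by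
      rintro d ⟨x, hx, hx2⟩
      refine ⟨αK₀ (σK₀⁻¹ x), (hS αK₀ hαmem _).mp ((hS σK₀⁻¹ (inv_mem hσmem) _).mp hx), ?_⟩
      show α ((σ * α)⁻¹ x.2) = d
      rw [hx2, mul_inv_rev, Equiv.Perm.mul_apply, perm_inv_apply_self,
        perm_apply_inv_self]
    have hfA : ∀ d : D, (∃ x ∈ S, x.2 = d) → ∃ x ∈ S, x.2 = α d := by
      rintro d ⟨x, hx, rfl⟩
      exact ⟨αK₀ x, (hS αK₀ hαmem _).mp hx, rfl⟩
    have hbA : ∀ d : D, (∃ x ∈ S, x.2 = α d) → ∃ x ∈ S, x.2 = d := by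
      rintro d ⟨x, hx, hx2⟩
      refine ⟨αK₀ x, (hS αK₀ hαmem _).mp hx, ?_⟩
      show α x.2 = d
      rw [hx2, hinv]
    have hT : ∀ g ∈ Subgroup.closure ({σ, α} : Set (Equiv.Perm D)), ∀ d : D,
        (∃ x ∈ S, x.2 = d) ↔ (∃ x ∈ S, x.2 = g d) := by
      intro g hg
      induction hg using Subgroup.closure_induction with
      | mem τ hτ =>
        rcases hτ with rfl | rfl
        · exact fun d => ⟨hfS d, hbS d⟩
        · exact fun d => ⟨hfA d, hbA d⟩
      | one => intro d; simp
      | mul g h _ _ pg ph =>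
        intro d
        rw [Equiv.Perm.mul_apply]
        exact (ph d).trans (pg (h d))
      | inv g _ pg =>
        intro d
        have := pg (g⁻¹ d)
        rw [perm_apply_inv_self] at this
        exact this.symm
    intro d
    obtain ⟨g, hg, hgd⟩ := hconn d₀ d
    obtain ⟨x, hxS, hx2⟩ := (hT g hg d₀).mp ⟨b₀, hb₀S, rfl⟩
    refine ⟨⟨x, hxS⟩, ?_⟩
    show x.2 = d
    rw [hx2, hgd]
  · -- injectivity of p on σK-orbits
    intro x y hsc hp
    obtain ⟨k, hk⟩ := hsc
    apply Subtype.ext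
    refine Prod.ext ?_ hp
    have h1 := hfst k x
    rw [hk] at h1
    exact h1.symm
  · -- the coloring
    have wd : ∀ a b : {x : G × D // x ∈ S}, σK.SameCycle a b → a.val.1 = b.val.1 := by
      intro a b hab
      obtain ⟨k, hk⟩ := hab
      rw [← hk]
      exact (hfst k a).symm
    refine ⟨Quotient.lift (fun x : {x : G × D // x ∈ S} => x.val.1) wd, ?_, ?_⟩
    · intro d' h
      have h' : d'.val.1 = (κ d'.val.2)⁻¹ * d'.val.1 := h
      apply hnwi d'.val.2
      rw [← inv_eq_one]
      exact mul_right_cancel ((h'.symm).trans (one_mul _).symm)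
    · intro d'
      show d'.val.1 * ((κ d'.val.2)⁻¹ * d'.val.1)⁻¹ = κ d'.val.2
      group
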